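/- Let G be a finite connected simple graph in which every cycle has length at most 4, and let v be a vertex of G lying on some cycle such that G − v is connected. Then for all vertices u, w distinct from v, dist_{G−v}(u,w) = dist_G(u,w); consequently W(G − v) = W(G) − t_G(v) < W(G). -/

import Mathlib

open SimpleGraph

/-- The Wiener index: sum of distances over unordered pairs of vertices. -/
noncomputable def wiener {V : Type*} [Fintype V] (G : SimpleGraph V) : ℕ :=
  (∑ u : V, ∑ v : V, G.dist u v) / 2

/-- The transmission of a vertex: sum of distances to all vertices. -/
noncomputable def transmission {V : Type*} [Fintype V] (G : SimpleGraph V) (v : V) : ℕ :=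
  ∑ u : V, G.dist v u

/-- The graph `G - v`: induced subgraph on the vertices distinct from `v`. -/
def delVert {V : Type*} (G : SimpleGraph V) (v : V) : SimpleGraph {u : V // u ≠ v} :=
  SimpleGraph.comap Subtype.val G

/-- A vertex is good if `G - v` is connected and has the same Wiener index as `G`. -/
def good {V : Type*} [Fintype V] [DecidableEq V] (G : SimpleGraph V) (v : V) : Prop :=
  (delVert G v).Connected ∧ wiener (delVert G v) = wiener G

/-! Distances cannot decrease when passing from `G` to `G - v`. Conversely, if `a` and `b` are
neighbours of `v` and `P` is a shortest `a`-`b` path in `G - v`, then `v a P b v` is a cycle of length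
`|P| + 2 ≤ 4`; so every detour `a v b` through `v` can be replaced by at most two edges avoiding `v`,
and distances in `G - v` are no larger than in `G`. Summing over pairs of vertices then gives
`W(G) = t_G(v) + W(G - v)`, with `t_G(v) > 0` because `G - v` is nonempty. -/

namespace SimpleGraph

variable {V W : Type*} {G : SimpleGraph V} {H : SimpleGraph W}

theorem Reachable.dist_map_le (f : G →g H) {u w : V} (h : G.Reachable u w) :
    H.dist (f u) (f w) ≤ G.dist u w := by
  obtain ⟨p, hp⟩ := h.exists_walk_length_eq_dist
  exact hp ▸ p.length_map f ▸ H.dist_le (p.map f)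

end SimpleGraph

section DelVert

variable {V : Type*} {G : SimpleGraph V} {v : V}

@[simps]
def delVertHom (G : SimpleGraph V) (v : V) : delVert G v →g G := ⟨Subtype.val, id⟩

theorem le_delVert_dist (hconn : (delVert G v).Connected) (u w : {x : V // x ≠ v}) :
    G.dist u w ≤ (delVert G v).dist u w :=
  (hconn u w).dist_map_le (delVertHom G v)

theorem delVert_dist_le_two (hshort : ∀ (u : V) (w : G.Walk u u), w.IsCycle → w.length ≤ 4)
    (hconn : (delVert G v).Connected) {a b : {x : V // x ≠ v}} (ha : G.Adj v a)
    (hb : G.Adj v b) : (delVert G v).dist a b ≤ 2 := by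
  obtain rfl | hab := eq_or_ne a b
  · simp
  obtain ⟨p, hp, hlen⟩ := hconn.exists_path_of_dist a b
  have ha' : G.Adj v (delVertHom G v a) := ha
  have hb' : G.Adj v (delVertHom G v b) := hb
  have hvp : v ∉ (p.map (delVertHom G v)).support := by simp
  have hcycle : (Walk.cons ha' ((p.map (delVertHom G v)).concat hb'.symm)).IsCycle := by
    refine (Walk.cons_isCycle_iff _ ha').mpr ⟨(hp.map Subtype.val_injective).concat hvp _, ?_⟩
    rw [Walk.edges_concat, List.concat_eq_append, List.mem_append, List.mem_singleton, not_or]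
    refine ⟨fun h => hvp (Walk.fst_mem_support_of_mem_edges _ h), ?_⟩
    simpa [Subtype.val_inj, a.2] using hab
  have := hshort v _ hcycle
  rw [Walk.length_cons, Walk.length_concat, Walk.length_map] at this
  omega

theorem delVert_dist_le_length (hshort : ∀ (u : V) (w : G.Walk u u), w.IsCycle → w.length ≤ 4)
    (hconn : (delVert G v).Connected) :
    ∀ {u w : V} (p : G.Walk u w) (hu : u ≠ v) (hw : w ≠ v),
      (delVert G v).dist ⟨u, hu⟩ ⟨w, hw⟩ ≤ p.length
  | _, _, .nil, _, _ => by simp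
  | _, _, .cons h .nil, _, _ => le_of_eq (dist_eq_one_iff_adj.mpr h)
  | u, w, .cons (v := x) h (.cons (v := y) h' p), hu, hw => by
    by_cases hx : x = v
    · have hvu : G.Adj v u := hx ▸ h.symm
      have hvy : G.Adj v y := hx ▸ h'
      calc (delVert G v).dist ⟨u, hu⟩ ⟨w, hw⟩
          ≤ (delVert G v).dist ⟨u, hu⟩ ⟨y, hvy.ne'⟩ +
              (delVert G v).dist ⟨y, hvy.ne'⟩ ⟨w, hw⟩ :=
            hconn.dist_triangle
        _ ≤ 2 + p.length :=
            add_le_add (delVert_dist_le_two hshort hconn hvu hvy)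
              (delVert_dist_le_length hshort hconn p _ hw)
        _ = (Walk.cons h (.cons h' p)).length := by simp only [Walk.length_cons]; omega
    · calc (delVert G v).dist ⟨u, hu⟩ ⟨w, hw⟩
          ≤ (delVert G v).dist ⟨u, hu⟩ ⟨x, hx⟩ + (delVert G v).dist ⟨x, hx⟩ ⟨w, hw⟩ :=
            hconn.dist_triangle
        _ ≤ 1 + (Walk.cons h' p).length := by
            gcongr
            · exact le_of_eq (dist_eq_one_iff_adj.mpr h)
            · exact delVert_dist_le_length hshort hconn _ hx hw
        _ = (Walk.cons h (.cons h' p)).length := by simp only [Walk.length_cons]; omega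

theorem delVert_dist_eq (hG : G.Connected)
    (hshort : ∀ (u : V) (w : G.Walk u u), w.IsCycle → w.length ≤ 4)
    (hconn : (delVert G v).Connected) (u w : {x : V // x ≠ v}) :
    (delVert G v).dist u w = G.dist u w := by
  refine le_antisymm ?_ (le_delVert_dist hconn u w)
  obtain ⟨p, hp⟩ := hG.exists_walk_length_eq_dist u w
  exact hp ▸ delVert_dist_le_length hshort hconn p u.2 w.2

variable [Fintype V]

theorem transmission_pos (hG : G.Connected) {u : V} (hu : u ≠ v) : 0 < transmission G v :=
  (hG.pos_dist_of_ne hu.symm).trans_le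
    (Finset.single_le_sum (fun _ _ => Nat.zero_le _) (Finset.mem_univ u))

variable [DecidableEq V]

theorem wiener_eq_transmission_add_wiener_delVert
    (hdist : ∀ u w : {x : V // x ≠ v}, (delVert G v).dist u w = G.dist u w) :
    wiener G = transmission G v + wiener (delVert G v) := by
  have hsum : ∑ u, ∑ w, G.dist u w =
      2 * transmission G v + ∑ u : {x : V // x ≠ v}, ∑ w : {x : V // x ≠ v}, G.dist u w := by
    have hrow : ∑ w : {x : V // x ≠ v}, G.dist v w = transmission G v := by
      rw [transmission, Fintype.sum_eq_add_sum_subtype_ne _ v, dist_self, zero_add]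
    have hcol : ∑ u : {x : V // x ≠ v}, G.dist u v = transmission G v :=
      hrow ▸ Finset.sum_congr rfl fun _ _ => dist_comm
    simp only [Fintype.sum_eq_add_sum_subtype_ne _ v, Finset.sum_add_distrib, dist_self, hrow,
      hcol]
    ring
  simp only [wiener, hsum, hdist, Nat.mul_add_div two_pos]

end DelVert

theorem dist_eq_and_wiener_lt_of_cycles_le_four_general {V : Type*} [Fintype V] [DecidableEq V]
    (G : SimpleGraph V) (hG : G.Connected)
    (hshort : ∀ (u : V) (w : G.Walk u u), w.IsCycle → w.length ≤ 4)
    (v : V)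
    (hconn : (delVert G v).Connected) :
    (∀ u w : {x : V // x ≠ v}, (delVert G v).dist u w = G.dist u w) ∧
    wiener (delVert G v) = wiener G - transmission G v ∧
    wiener (delVert G v) < wiener G := by
  have hdist := delVert_dist_eq hG hshort hconn
  have hW := wiener_eq_transmission_add_wiener_delVert hdist
  obtain ⟨⟨u, hu⟩⟩ := hconn.nonempty
  have ht := transmission_pos hG hu
  exact ⟨hdist, by omega, by omega⟩

/-- If every cycle of a connected graph has length at most 4 and `v` lies on a cycle with
`G - v` connected, then distances between remaining vertices are unchanged, whence
`W(G - v) = W(G) - t_G(v) < W(G)`. -/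
theorem dist_eq_and_wiener_lt_of_cycles_le_four {V : Type*} [Fintype V] [DecidableEq V]
    (G : SimpleGraph V) (hG : G.Connected)
    (hshort : ∀ (u : V) (w : G.Walk u u), w.IsCycle → w.length ≤ 4)
    (v : V) (hv : ∃ (u : V) (w : G.Walk u u), w.IsCycle ∧ v ∈ w.support)
    (hconn : (delVert G v).Connected) :
    (∀ u w : {x : V // x ≠ v}, (delVert G v).dist u w = G.dist u w) ∧
    wiener (delVert G v) = wiener G - transmission G v ∧
    wiener (delVert G v) < wiener G :=
  dist_eq_and_wiener_lt_of_cycles_le_four_general G hG hshort v hconn
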